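/- arXiv:1310.4607 — 2 statements merged into one kernel-verified Lean document; each statement's English description precedes it below -/
import Mathlib

section
/- Let ξ and η be positive irrational real numbers with ξ > 1 and ξ·η = m for a positive natural number m. If 0 ≤ n < N, then |m·q_n/p_n − η| > |m·q_N/p_N − η|. In particular, two different connections in the ladder of (ξ, η) do not intersect: the order of the corresponding approximations m·q/p to η agrees with the order of the convergents p/q to ξ. -/
/-- Complete quotients: `cq ξ 0 = ξ`, `cq ξ (n+1) = 1/(cq ξ n - ⌊cq ξ n⌋)`. -/
noncomputable def cq (ξ : ℝ) : ℕ → ℝ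
  | 0 => ξ
  | n + 1 => 1 / (cq ξ n - ⌊cq ξ n⌋)

/-- Partial quotients: `pquot ξ n = b_n = ⌊ξ_n⌋`. -/
noncomputable def pquot (ξ : ℝ) (n : ℕ) : ℤ := ⌊cq ξ n⌋

/-- Convergent numerators, shifted by one: `cnum ξ 0 = p_{-1} = 1`,
`cnum ξ 1 = p_0 = b_0`, and `cnum ξ (n+1) = p_n = b_n p_{n-1} + p_{n-2}`. -/
noncomputable def cnum (ξ : ℝ) : ℕ → ℤ
  | 0 => 1
  | 1 => pquot ξ 0
  | n + 2 => pquot ξ (n + 1) * cnum ξ (n + 1) + cnum ξ n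

/-- Convergent denominators, shifted by one: `cden ξ 0 = q_{-1} = 0`,
`cden ξ 1 = q_0 = 1`, and `cden ξ (n+1) = q_n = b_n q_{n-1} + q_{n-2}`. -/
noncomputable def cden (ξ : ℝ) : ℕ → ℤ
  | 0 => 0
  | 1 => 1
  | n + 2 => pquot ξ (n + 1) * cden ξ (n + 1) + cden ξ n

/-!
Write `e_n = q_n ξ - p_n`. The complete quotients satisfy `ξ_{n+1} e_n = -e_{n-1}` with
`ξ_{n+1} > 1`, so `|e_n|` decreases strictly, while the numerators `p_n` increase. Since
`ξ η = m`, we have `m q_n / p_n - η = η e_n / p_n`, which therefore decreases strictly in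
absolute value.
-/

/-- Convergent errors `q_{n-1} ξ - p_{n-1}`, with the index shift of `cnum` and `cden`. -/
noncomputable def cerr (ξ : ℝ) (n : ℕ) : ℝ := cden ξ n * ξ - cnum ξ n

section ContinuedFraction

variable {ξ : ℝ}

lemma irrational_cq (h : Irrational ξ) : ∀ n, Irrational (cq ξ n)
  | 0 => h
  | n + 1 => by
    simpa [cq, one_div] using ((irrational_cq h n).sub_intCast ⌊cq ξ n⌋).inv

lemma fract_cq_pos (h : Irrational ξ) (n : ℕ) : 0 < Int.fract (cq ξ n) :=
  Int.fract_pos.mpr ((irrational_cq h n).ne_int _)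

lemma cq_succ_mul_fract_cq (h : Irrational ξ) (n : ℕ) :
    cq ξ (n + 1) * Int.fract (cq ξ n) = 1 := by
  change 1 / Int.fract (cq ξ n) * Int.fract (cq ξ n) = 1
  exact one_div_mul_cancel (fract_cq_pos h n).ne'

lemma one_lt_cq_succ (h : Irrational ξ) (n : ℕ) : 1 < cq ξ (n + 1) :=
  one_lt_one_div (fract_cq_pos h n) (Int.fract_lt_one _)

lemma one_le_pquot (h1 : 1 ≤ ξ) (h : Irrational ξ) : ∀ n, 1 ≤ pquot ξ n
  | 0 => Int.le_floor.mpr (by exact_mod_cast h1)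
  | n + 1 => Int.le_floor.mpr (by exact_mod_cast (one_lt_cq_succ h n).le)

lemma cnum_pos (h1 : 1 ≤ ξ) (h : Irrational ξ) : ∀ n, 0 < cnum ξ n
  | 0 => one_pos
  | 1 => one_le_pquot h1 h 0
  | n + 2 => by
    have := one_le_pquot h1 h (n + 1)
    have := cnum_pos h1 h (n + 1)
    have := cnum_pos h1 h n
    change 0 < pquot ξ (n + 1) * cnum ξ (n + 1) + cnum ξ n
    positivity

lemma monotone_cnum (h1 : 1 ≤ ξ) (h : Irrational ξ) : Monotone (cnum ξ) := by
  refine monotone_nat_of_le_succ fun n => ?_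
  match n with
  | 0 => exact one_le_pquot h1 h 0
  | n + 1 =>
    have := one_le_pquot h1 h (n + 1)
    have := cnum_pos h1 h (n + 1)
    have := cnum_pos h1 h n
    change cnum ξ (n + 1) ≤ pquot ξ (n + 1) * cnum ξ (n + 1) + cnum ξ n
    nlinarith

lemma cerr_zero : cerr ξ 0 = -1 := by simp [cerr, cden, cnum]

lemma cerr_one : cerr ξ 1 = Int.fract ξ := by
  simp only [cerr, cden, cnum, pquot, cq, Int.fract, Int.cast_one, one_mul]

lemma cerr_add_two (n : ℕ) :
    cerr ξ (n + 2) = pquot ξ (n + 1) * cerr ξ (n + 1) + cerr ξ n := by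
  simp only [cerr, cden, cnum]
  push_cast
  ring

lemma cq_succ_mul_cerr_succ (h : Irrational ξ) :
    ∀ n, cq ξ (n + 1) * cerr ξ (n + 1) = -cerr ξ n
  | 0 => by rw [cerr_zero, cerr_one, neg_neg]; exact cq_succ_mul_fract_cq h 0
  | n + 1 => by
    have ih := cq_succ_mul_cerr_succ h n
    have hfract := cq_succ_mul_fract_cq h (n + 1)
    rw [Int.fract, ← pquot] at hfract
    rw [cerr_add_two]
    linear_combination cq ξ (n + 2) * ih - cerr ξ (n + 1) * hfract

lemma cerr_ne_zero (h : Irrational ξ) : ∀ n, cerr ξ n ≠ 0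
  | 0 => by simp [cerr_zero]
  | n + 1 => fun hz => cerr_ne_zero h n <| by
    simpa [hz] using (cq_succ_mul_cerr_succ h n).symm

lemma strictAnti_abs_cerr (h : Irrational ξ) : StrictAnti fun n => |cerr ξ n| := by
  refine strictAnti_nat_of_succ_lt fun n => ?_
  have hcq := one_lt_cq_succ h n
  calc |cerr ξ (n + 1)| < cq ξ (n + 1) * |cerr ξ (n + 1)| :=
        lt_mul_of_one_lt_left (abs_pos.mpr (cerr_ne_zero h _)) hcq
    _ = |cerr ξ n| := by
        rw [← abs_of_pos (one_pos.trans hcq), ← abs_mul, cq_succ_mul_cerr_succ h, abs_neg]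

end ContinuedFraction

theorem connections_do_not_intersect_general
    (ξ η : ℝ) (m : ℕ) (hηpos : 0 < η) (hξ1 : 1 < ξ)
    (hξirr : Irrational ξ)
    (hmul : ξ * η = m) (n N : ℕ) (hnN : n < N) :
    |(m : ℝ) * (cden ξ (n + 1) : ℝ) / (cnum ξ (n + 1) : ℝ) - η| >
    |(m : ℝ) * (cden ξ (N + 1) : ℝ) / (cnum ξ (N + 1) : ℝ) - η| := by
  have hp : ∀ k, (0 : ℝ) < cnum ξ k := fun k => by exact_mod_cast cnum_pos hξ1.le hξirr k
  have hdist : ∀ k, |(m : ℝ) * cden ξ k / cnum ξ k - η| = η * |cerr ξ k| / cnum ξ k := by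
    intro k
    have hdiff : (m : ℝ) * cden ξ k / cnum ξ k - η = η * cerr ξ k / cnum ξ k := by
      rw [← hmul, cerr]
      field_simp [(hp k).ne']
    rw [hdiff, abs_div, abs_mul, abs_of_pos hηpos, abs_of_pos (hp k)]
  rw [gt_iff_lt, hdist, hdist]
  have hple : (cnum ξ (n + 1) : ℝ) ≤ cnum ξ (N + 1) := by
    exact_mod_cast monotone_cnum hξ1.le hξirr (Nat.succ_le_succ hnN.le)
  have herr := strictAnti_abs_cerr hξirr (Nat.succ_lt_succ hnN)
  calc η * |cerr ξ (N + 1)| / cnum ξ (N + 1) ≤ η * |cerr ξ (N + 1)| / cnum ξ (n + 1) := by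
        gcongr
        exact hp _
    _ < η * |cerr ξ (n + 1)| / cnum ξ (n + 1) := by
        gcongr
        exact hp _

/-- Proposition 2.3: two different connections do not intersect; the order of
the approximations `m q/p` to `η` agrees with the order of the convergents
`p/q` to `ξ`. -/
theorem connections_do_not_intersect
    (ξ η : ℝ) (m : ℕ) (hξpos : 0 < ξ) (hηpos : 0 < η) (hξ1 : 1 < ξ)
    (hξirr : Irrational ξ) (hηirr : Irrational η) (hm : 0 < m)
    (hmul : ξ * η = m) (n N : ℕ) (hnN : n < N) :
    |(m : ℝ) * (cden ξ (n + 1) : ℝ) / (cnum ξ (n + 1) : ℝ) - η| >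
    |(m : ℝ) * (cden ξ (N + 1) : ℝ) / (cnum ξ (N + 1) : ℝ) - η| :=
  connections_do_not_intersect_general ξ η m hηpos hξ1 hξirr hmul n N hnN
end

section
/- Let ξ and η be positive irrational real numbers and m a positive natural number with ξ·η = m. Suppose the three consecutive pairs (n−1, k−1), (n, k) and (n+1, k+1) are all connected, where n ≥ 2 and k ≥ 2, and set r = p_{n−1}/Q_{k−1}, s = P_{k−1}/q_{n−1}. Then for the middle connection one has r·b_n − s·B_k = 0. -/
theorem cq_succ (ξ : ℝ) (n : ℕ) : cq ξ (n + 1) = (Int.fract (cq ξ n))⁻¹ := by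
  rw [cq, one_div, Int.self_sub_floor]

theorem Irrational.cq {ξ : ℝ} (h : Irrational ξ) : ∀ n, Irrational (cq ξ n)
  | 0 => h
  | n + 1 => by
    rw [cq_succ, ← Int.self_sub_floor]
    exact ((h.cq n).sub_intCast _).inv

theorem pquot_succ_nonneg (ξ : ℝ) (n : ℕ) : 0 ≤ pquot ξ (n + 1) :=
  Int.floor_nonneg.2 (by rw [cq_succ]; exact inv_nonneg.2 (Int.fract_nonneg _))

theorem one_le_pquot_succ {ξ : ℝ} (h : Irrational ξ) (n : ℕ) : 1 ≤ pquot ξ (n + 1) := by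
  have hpos : 0 < Int.fract (cq ξ n) := Int.fract_pos.2 ((h.cq n).ne_int _)
  refine Int.le_floor.2 ?_
  rw [cq_succ, Int.cast_one]
  exact one_le_inv_iff₀.2 ⟨hpos, (Int.fract_lt_one _).le⟩

theorem cnum_add_two (ξ : ℝ) (n : ℕ) :
    cnum ξ (n + 2) = pquot ξ (n + 1) * cnum ξ (n + 1) + cnum ξ n := rfl

theorem cden_add_two (ξ : ℝ) (n : ℕ) :
    cden ξ (n + 2) = pquot ξ (n + 1) * cden ξ (n + 1) + cden ξ n := rfl

theorem cnum_nonneg {ξ : ℝ} (h : 0 ≤ ξ) : ∀ n, 0 ≤ cnum ξ n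
  | 0 => zero_le_one
  | 1 => Int.floor_nonneg.2 h
  | n + 2 =>
    add_nonneg (mul_nonneg (pquot_succ_nonneg ξ n) (cnum_nonneg h (n + 1))) (cnum_nonneg h n)

theorem cden_nonneg (ξ : ℝ) : ∀ n, 0 ≤ cden ξ n
  | 0 => le_rfl
  | 1 => zero_le_one
  | n + 2 =>
    add_nonneg (mul_nonneg (pquot_succ_nonneg ξ n) (cden_nonneg ξ (n + 1))) (cden_nonneg ξ n)

theorem cden_succ_pos {ξ : ℝ} (h : Irrational ξ) : ∀ n, 0 < cden ξ (n + 1)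
  | 0 => one_pos
  | n + 1 => add_pos_of_pos_of_nonneg
      (mul_pos (one_le_pquot_succ h n) (cden_succ_pos h n)) (cden_nonneg ξ n)

theorem cnum_mul_cden_sub_cnum_mul_cden (ξ : ℝ) :
    ∀ n, cnum ξ (n + 1) * cden ξ n - cnum ξ n * cden ξ (n + 1) = (-1) ^ (n + 1)
  | 0 => by simp [cnum, cden]
  | n + 1 => by
    rw [cnum_add_two, cden_add_two, pow_succ]
    linear_combination -cnum_mul_cden_sub_cnum_mul_cden ξ n

theorem isCoprime_of_mul_sub_mul_eq_neg_one_pow {R : Type*} [CommRing R] {a b c d : R} {t : ℕ}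
    (h : a * d - c * b = (-1) ^ t) : IsCoprime a b := by
  have hsq : (-1 : R) ^ t * (-1) ^ t = 1 := by rw [← mul_pow, neg_one_mul, neg_neg, one_pow]
  exact ⟨(-1) ^ t * d, -((-1) ^ t * c), by linear_combination (-1) ^ t * h + hsq⟩

theorem isCoprime_cnum_cden (ξ : ℝ) : ∀ n, IsCoprime (cnum ξ n) (cden ξ n)
  | 0 => isCoprime_one_left
  | n + 1 => isCoprime_of_mul_sub_mul_eq_neg_one_pow (cnum_mul_cden_sub_cnum_mul_cden ξ n)

theorem Int.eq_of_mul_eq_mul_of_isCoprime {a b c d : ℤ} (h : a * b = c * d) (hac : IsCoprime a c)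
    (hbd : IsCoprime b d) (ha : 0 ≤ a) (hd : 0 ≤ d) : a = d :=
  Int.dvd_antisymm ha hd (hac.dvd_of_dvd_mul_left ⟨b, h.symm⟩)
    (hbd.symm.dvd_of_dvd_mul_right ⟨c, h.trans (mul_comm c d)⟩)

def Connected (ξ η : ℝ) (m : ℤ) (n k : ℕ) : Prop :=
  cnum ξ n * cnum η k = m * cden ξ n * cden η k

/-- For a connected pair `(n, k)`, `r = connRatio ξ η n k` and `s = connRatio η ξ k n`. -/
noncomputable def connRatio (ξ η : ℝ) (n k : ℕ) : ℤ := cnum ξ n / cden η k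

theorem connRatio_nonneg {ξ : ℝ} (h : 0 ≤ ξ) (η : ℝ) (n k : ℕ) : 0 ≤ connRatio ξ η n k :=
  Int.ediv_nonneg (cnum_nonneg h n) (cden_nonneg η k)

namespace Connected

variable {ξ η : ℝ} {m : ℤ} {n k : ℕ}

theorem symm (h : Connected ξ η m n k) : Connected η ξ m k n := by
  unfold Connected at *
  linear_combination h

theorem cden_dvd_cnum (h : Connected ξ η m n k) : cden η k ∣ cnum ξ n :=
  (isCoprime_cnum_cden η k).symm.dvd_of_dvd_mul_right ⟨m * cden ξ n, by rw [h]; ring⟩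

theorem cnum_eq (h : Connected ξ η m n k) : cnum ξ n = cden η k * connRatio ξ η n k :=
  (Int.mul_ediv_cancel' h.cden_dvd_cnum).symm

theorem connRatio_mul_connRatio (h : Connected ξ η m n k) (hξ : cden ξ n ≠ 0)
    (hη : cden η k ≠ 0) : connRatio ξ η n k * connRatio η ξ k n = m := by
  have h' := h
  unfold Connected at h'
  rw [h.cnum_eq, h.symm.cnum_eq] at h'
  exact mul_left_cancel₀ (mul_ne_zero hξ hη) (by linear_combination h')

theorem isCoprime_connRatio_succ (hprev : Connected ξ η m (n + 1) (k + 1))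
    (hmid : Connected ξ η m (n + 2) (k + 2)) :
    IsCoprime (connRatio ξ η (n + 2) (k + 2)) (connRatio ξ η (n + 1) (k + 1)) := by
  have hdet := cnum_mul_cden_sub_cnum_mul_cden ξ (n + 1)
  rw [hmid.cnum_eq, hprev.cnum_eq] at hdet
  exact isCoprime_of_mul_sub_mul_eq_neg_one_pow (d := cden η (k + 2) * cden ξ (n + 1))
    (c := cden η (k + 1) * cden ξ (n + 2)) (by linear_combination hdet)

end Connected

section ThreeConnections

variable {ξ η : ℝ} {m : ℤ} {n k : ℕ}

theorem connRatio_eq_connRatio_of_connected_succ (hξ0 : 0 ≤ ξ) (hη0 : 0 ≤ η)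
    (hξ : Irrational ξ) (hη : Irrational η) (hprev : Connected ξ η m (n + 1) (k + 1))
    (hmid : Connected ξ η m (n + 2) (k + 2)) :
    connRatio ξ η (n + 2) (k + 2) = connRatio η ξ (k + 1) (n + 1) := by
  have hmul : connRatio ξ η (n + 2) (k + 2) * connRatio η ξ (k + 2) (n + 2) =
      connRatio ξ η (n + 1) (k + 1) * connRatio η ξ (k + 1) (n + 1) := by
    rw [hmid.connRatio_mul_connRatio (cden_succ_pos hξ _).ne' (cden_succ_pos hη _).ne',
      hprev.connRatio_mul_connRatio (cden_succ_pos hξ _).ne' (cden_succ_pos hη _).ne']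
  exact Int.eq_of_mul_eq_mul_of_isCoprime hmul
    (hprev.isCoprime_connRatio_succ hmid)
    (hprev.symm.isCoprime_connRatio_succ hmid.symm)
    (connRatio_nonneg hξ0 η _ _) (connRatio_nonneg hη0 ξ _ _)

theorem pquot_mul_connRatio_eq_of_connected_succ_succ (hξ : Irrational ξ) (hη : Irrational η)
    (hprev : Connected ξ η m (n + 1) (k + 1)) (hmid : Connected ξ η m (n + 2) (k + 2))
    (hnext : Connected ξ η m (n + 3) (k + 3)) :
    pquot ξ (n + 2) * connRatio η ξ (k + 1) (n + 1) =
      pquot η (k + 2) * connRatio η ξ (k + 2) (n + 2) := by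
  have hm := hmid.connRatio_mul_connRatio (cden_succ_pos hξ _).ne' (cden_succ_pos hη _).ne'
  have hm' := hprev.connRatio_mul_connRatio (cden_succ_pos hξ _).ne' (cden_succ_pos hη _).ne'
  have hdet := cnum_mul_cden_sub_cnum_mul_cden ξ (n + 1)
  have hp := hmid.cnum_eq
  have hP := hmid.symm.cnum_eq
  have hp' := hprev.cnum_eq
  have hP' := hprev.symm.cnum_eq
  unfold Connected at hprev hmid hnext
  rw [cnum_add_two ξ (n + 1), cnum_add_two η (k + 1), cden_add_two ξ (n + 1),
    cden_add_two η (k + 1)] at hnext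
  set b := pquot ξ (n + 2)
  set B := pquot η (k + 2)
  set s := connRatio η ξ (k + 2) (n + 2)
  set s' := connRatio η ξ (k + 1) (n + 1)
  have key : (b * s' - B * s) * (-1) ^ (n + 2) = 0 := by
    linear_combination hnext - b * B * hmid - hprev - b * cnum ξ (n + 2) * hP'
      - b * cden ξ (n + 2) * cden η (k + 1) * hm' - b * s' * cden ξ (n + 2) * hp'
      - B * cden ξ (n + 1) * cden η (k + 2) * hm - B * s * cden ξ (n + 1) * hp
      - B * cnum ξ (n + 1) * hP - (b * s' - B * s) * hdet
  simpa [sub_eq_zero] using key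

end ThreeConnections

theorem three_consecutive_connections_middle_general
    (ξ η : ℝ) (m : ℕ) (hξpos : 0 < ξ) (hηpos : 0 < η)
    (hξirr : Irrational ξ) (hηirr : Irrational η)
    (n k : ℕ) (hn : 2 ≤ n) (hk : 2 ≤ k)
    (hconnPrev : cnum ξ (n - 1) * cnum η (k - 1) =
      (m : ℤ) * cden ξ (n - 1) * cden η (k - 1))
    (hconn : cnum ξ n * cnum η k = (m : ℤ) * cden ξ n * cden η k)
    (hconnNext : cnum ξ (n + 1) * cnum η (k + 1) =
      (m : ℤ) * cden ξ (n + 1) * cden η (k + 1)) :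
    (cnum ξ n / cden η k) * pquot ξ n - (cnum η k / cden ξ n) * pquot η k = 0 := by
  obtain ⟨n, rfl⟩ : ∃ n', n = n' + 2 := ⟨n - 2, by omega⟩
  obtain ⟨k, rfl⟩ : ∃ k', k = k' + 2 := ⟨k - 2, by omega⟩
  have hr : connRatio ξ η (n + 2) (k + 2) = connRatio η ξ (k + 1) (n + 1) :=
    connRatio_eq_connRatio_of_connected_succ hξpos.le hηpos.le hξirr hηirr hconnPrev hconn
  have hb := pquot_mul_connRatio_eq_of_connected_succ_succ hξirr hηirr hconnPrev hconn hconnNext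
  change connRatio ξ η (n + 2) (k + 2) * _ - connRatio η ξ (k + 2) (n + 2) * _ = 0
  rw [hr]
  linear_combination hb

/-- Lemma 2.9: for three consecutive connections, the middle one satisfies
`r·b_n - s·B_k = 0`. -/
theorem three_consecutive_connections_middle
    (ξ η : ℝ) (m : ℕ) (hξpos : 0 < ξ) (hηpos : 0 < η)
    (hξirr : Irrational ξ) (hηirr : Irrational η) (hm : 0 < m)
    (hmul : ξ * η = m) (n k : ℕ) (hn : 2 ≤ n) (hk : 2 ≤ k)
    (hconnPrev : cnum ξ (n - 1) * cnum η (k - 1) =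
      (m : ℤ) * cden ξ (n - 1) * cden η (k - 1))
    (hconn : cnum ξ n * cnum η k = (m : ℤ) * cden ξ n * cden η k)
    (hconnNext : cnum ξ (n + 1) * cnum η (k + 1) =
      (m : ℤ) * cden ξ (n + 1) * cden η (k + 1)) :
    (cnum ξ n / cden η k) * pquot ξ n - (cnum η k / cden ξ n) * pquot η k = 0 :=
  three_consecutive_connections_middle_general ξ η m hξpos hηpos hξirr hηirr n k hn hk hconnPrev
    hconn hconnNext
end
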